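/- Let $(M, \mu)$ be a measure space, let $(e_j)_{j \in J}$ be an orthonormal family in $L^2(M, \mu)$, let $X_S \subset J$ be a finite subset, and let $E \subset M$ be a measurable set of finite measure. Suppose there is $B \geq 0$ such that $\sum_{j \in X_S} |e_j(x)|^2 \leq B$ for $\mu$-almost every $x \in M$. Suppose $f \in L^2(M,\mu)$ is not almost everywhere zero and satisfies $\|f - 1_E f\|_{L^2} \leq \epsilon \|f\|_{L^2}$ and $\|f - \sum_{j \in X_S} \langle f, e_j\rangle e_j\|_{L^2} \leq \epsilon' \|f\|_{L^2}$, with $0 \leq \epsilon, \epsilon' < 1$ and $\epsilon + \epsilon' < 1$. Then $(1 - \epsilon - \epsilon')^2 \leq \mu(E) \cdot B$. -/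

import Mathlib

/-!
By Bessel's inequality the coefficients of `f` on the finite family satisfy
`∑ |⟨f, e_j⟩|² ≤ ‖f‖²`, so by Cauchy–Schwarz the spectral projection `S f` of `f` is bounded
pointwise by `‖f‖ √B`, whence `‖1_E S f‖₂ ≤ ‖f‖ √(μ(E) B)`. Splitting
`f = (f - 1_E f) + 1_E (f - S f) + 1_E S f` gives `‖f‖ ≤ (ε + ε' + √(μ(E) B)) ‖f‖`, and dividing
by `‖f‖ ≠ 0` and squaring gives the claim.
-/

open MeasureTheory ComplexConjugate

section

variable {α ι 𝕜 : Type*} [RCLike 𝕜] [MeasurableSpace α] {μ : Measure α}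

theorem norm_sum_mul_le_sqrt_mul_sqrt {R : Type*} [SeminormedRing R] (s : Finset ι)
    (c v : ι → R) :
    ‖∑ i ∈ s, c i * v i‖ ≤ √(∑ i ∈ s, ‖c i‖ ^ 2) * √(∑ i ∈ s, ‖v i‖ ^ 2) :=
  calc ‖∑ i ∈ s, c i * v i‖ ≤ ∑ i ∈ s, ‖c i‖ * ‖v i‖ :=
        norm_sum_le_of_le s fun _ _ => norm_mul_le _ _
    _ ≤ _ := Real.sum_mul_le_sqrt_mul_sqrt s _ _

namespace MeasureTheory

theorem L2.inner_toLp_eq_integral {f g : α → 𝕜} (hf : MemLp f 2 μ) (hg : MemLp g 2 μ) :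
    inner 𝕜 (hf.toLp f) (hg.toLp g) = ∫ x, g x * conj (f x) ∂μ := by
  rw [L2.inner_def]
  refine integral_congr_ae ?_
  filter_upwards [hf.coeFn_toLp, hg.coeFn_toLp] with x hfx hgx
  rw [hfx, hgx, RCLike.inner_apply, mul_comm]

theorem eLpNorm_indicator_le_of_ae_bound {F : Type*} [NormedAddCommGroup F] {p : ENNReal}
    {s : Set α} (hs : MeasurableSet s) {g : α → F} {C : ℝ} (hg : ∀ᵐ x ∂μ, ‖g x‖ ≤ C) :
    eLpNorm (s.indicator g) p μ ≤ μ s ^ p.toReal⁻¹ * ENNReal.ofReal C := by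
  rw [eLpNorm_indicator_eq_eLpNorm_restrict hs]
  simpa using eLpNorm_le_of_ae_bound (ae_restrict_of_ae hg)

theorem eLpNorm_le_add_add_indicator {F : Type*} [NormedAddCommGroup F] {p : ENNReal}
    (hp : 1 ≤ p) {s : Set α} (hs : MeasurableSet s) {f g : α → F}
    (hf : AEStronglyMeasurable f μ) (hg : AEStronglyMeasurable g μ) :
    eLpNorm f p μ ≤
      eLpNorm (f - s.indicator f) p μ + eLpNorm (f - g) p μ + eLpNorm (s.indicator g) p μ := by
  have hsplit : f = (f - s.indicator f) + s.indicator (f - g) + s.indicator g := by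
    ext x
    by_cases hx : x ∈ s <;> simp [hx]
  calc eLpNorm f p μ
      = eLpNorm ((f - s.indicator f) + s.indicator (f - g) + s.indicator g) p μ := by
        rw [← hsplit]
    _ ≤ eLpNorm (f - s.indicator f) p μ + eLpNorm (s.indicator (f - g)) p μ
          + eLpNorm (s.indicator g) p μ := by
        grw [eLpNorm_add_le ((hf.sub (hf.indicator hs)).add ((hf.sub hg).indicator hs))
          (hg.indicator hs) hp, eLpNorm_add_le (hf.sub (hf.indicator hs))
          ((hf.sub hg).indicator hs) hp]
    _ ≤ _ := by grw [eLpNorm_indicator_le]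

noncomputable def spectralProjection (μ : Measure α) (e : ι → α → 𝕜) (s : Finset ι)
    (f : α → 𝕜) : α → 𝕜 :=
  fun x => ∑ i ∈ s, (∫ y, f y * conj (e i y) ∂μ) * e i x

theorem memLp_spectralProjection {e : ι → α → 𝕜} (he : ∀ i, MemLp (e i) 2 μ) (s : Finset ι)
    (f : α → 𝕜) :
    MemLp (spectralProjection μ e s f) 2 μ :=
  memLp_finsetSum s fun i _ => (he i).const_mul _

variable [DecidableEq ι] {e : ι → α → 𝕜}

theorem orthonormal_toLp (he : ∀ i, MemLp (e i) 2 μ)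
    (horth : ∀ i j, ∫ x, e i x * conj (e j x) ∂μ = if i = j then 1 else 0) :
    Orthonormal 𝕜 fun i => (he i).toLp (e i) := by
  rw [orthonormal_iff_ite]
  intro i j
  rw [L2.inner_toLp_eq_integral, horth j i]
  simp only [eq_comm]

theorem sum_norm_integral_mul_conj_sq_le (he : ∀ i, MemLp (e i) 2 μ)
    (horth : ∀ i j, ∫ x, e i x * conj (e j x) ∂μ = if i = j then 1 else 0)
    {f : α → 𝕜} (hf : MemLp f 2 μ) (s : Finset ι) :
    ∑ i ∈ s, ‖∫ x, f x * conj (e i x) ∂μ‖ ^ 2 ≤ (eLpNorm f 2 μ).toReal ^ 2 := by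
  simpa only [L2.inner_toLp_eq_integral, Lp.norm_toLp] using
    (orthonormal_toLp he horth).sum_inner_products_le (hf.toLp f) (s := s)

theorem norm_spectralProjection_le (he : ∀ i, MemLp (e i) 2 μ)
    (horth : ∀ i j, ∫ x, e i x * conj (e j x) ∂μ = if i = j then 1 else 0)
    {f : α → 𝕜} (hf : MemLp f 2 μ) {s : Finset ι} {B : ℝ}
    (hbound : ∀ᵐ x ∂μ, ∑ i ∈ s, ‖e i x‖ ^ 2 ≤ B) :
    ∀ᵐ x ∂μ, ‖spectralProjection μ e s f x‖ ≤ (eLpNorm f 2 μ).toReal * √B := by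
  filter_upwards [hbound] with x hx
  calc ‖spectralProjection μ e s f x‖
      ≤ √(∑ i ∈ s, ‖∫ y, f y * conj (e i y) ∂μ‖ ^ 2) * √(∑ i ∈ s, ‖e i x‖ ^ 2) :=
        norm_sum_mul_le_sqrt_mul_sqrt s _ _
    _ ≤ √((eLpNorm f 2 μ).toReal ^ 2) * √B := by
        gcongr
        exact sum_norm_integral_mul_conj_sq_le he horth hf s
    _ = (eLpNorm f 2 μ).toReal * √B := by rw [Real.sqrt_sq ENNReal.toReal_nonneg]

theorem eLpNorm_le_mul_eLpNorm_of_concentrated (he : ∀ i, MemLp (e i) 2 μ)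
    (horth : ∀ i j, ∫ x, e i x * conj (e j x) ∂μ = if i = j then 1 else 0)
    {s : Finset ι} {B : ℝ} (hbound : ∀ᵐ x ∂μ, ∑ i ∈ s, ‖e i x‖ ^ 2 ≤ B)
    {E : Set α} (hE : MeasurableSet E) {f : α → 𝕜} (hf : MemLp f 2 μ) {ε ε' : ℝ}
    (hconc : eLpNorm (f - E.indicator f) 2 μ ≤ ENNReal.ofReal ε * eLpNorm f 2 μ)
    (hspec : eLpNorm (f - spectralProjection μ e s f) 2 μ ≤ ENNReal.ofReal ε' * eLpNorm f 2 μ) :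
    eLpNorm f 2 μ ≤ (ENNReal.ofReal ε + ENNReal.ofReal ε' + μ E ^ (2⁻¹ : ℝ) * ENNReal.ofReal √B)
      * eLpNorm f 2 μ :=
  calc eLpNorm f 2 μ
      ≤ eLpNorm (f - E.indicator f) 2 μ + eLpNorm (f - spectralProjection μ e s f) 2 μ
          + eLpNorm (E.indicator (spectralProjection μ e s f)) 2 μ :=
        eLpNorm_le_add_add_indicator one_le_two hE hf.1 (memLp_spectralProjection he s f).1
    _ ≤ ENNReal.ofReal ε * eLpNorm f 2 μ + ENNReal.ofReal ε' * eLpNorm f 2 μ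
          + μ E ^ (2 : ENNReal).toReal⁻¹ * ENNReal.ofReal ((eLpNorm f 2 μ).toReal * √B) := by
        grw [hconc, hspec,
          eLpNorm_indicator_le_of_ae_bound hE (norm_spectralProjection_le he horth hf hbound)]
    _ = _ := by
        rw [ENNReal.ofReal_mul ENNReal.toReal_nonneg, ENNReal.ofReal_toReal hf.eLpNorm_ne_top,
          ENNReal.toReal_ofNat]
        ring

end MeasureTheory

end

theorem statement9_general {M J : Type*} [MeasurableSpace M] [DecidableEq J] (μ : Measure M)
    (e : J → M → ℂ) (he2 : ∀ j, MemLp (e j) 2 μ)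
    (horth : ∀ i j, ∫ x, e i x * (starRingEnd ℂ) (e j x) ∂μ = if i = j then 1 else 0)
    (XS : Finset J) (E : Set M) (hE : MeasurableSet E) (hEfin : μ E < ⊤)
    (B : ℝ) (hB : 0 ≤ B)
    (hbound : ∀ᵐ x ∂μ, ∑ j ∈ XS, ‖e j x‖ ^ 2 ≤ B)
    (f : M → ℂ) (hf : MemLp f 2 μ) (hf0 : ¬ (f =ᵐ[μ] 0))
    (ε ε' : ℝ) (hε0 : 0 ≤ ε) (hε'0 : 0 ≤ ε')
    (hsum : ε + ε' < 1)
    (hconc : eLpNorm (f - E.indicator f) 2 μ ≤ ENNReal.ofReal ε * eLpNorm f 2 μ)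
    (hspec : eLpNorm
        (f - fun x => ∑ j ∈ XS, (∫ y, f y * (starRingEnd ℂ) (e j y) ∂μ) * e j x) 2 μ
      ≤ ENNReal.ofReal ε' * eLpNorm f 2 μ) :
    (1 - ε - ε') ^ 2 ≤ (μ E).toReal * B := by
  have hN0 : eLpNorm f 2 μ ≠ 0 := fun h => hf0 ((eLpNorm_eq_zero_iff hf.1 two_ne_zero).1 h)
  have hμE : μ E ^ (2⁻¹ : ℝ) = ENNReal.ofReal √(μ E).toReal := by
    rw [← ENNReal.ofReal_toReal hEfin.ne, ENNReal.ofReal_rpow_of_nonneg ENNReal.toReal_nonneg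
      (by norm_num), ENNReal.toReal_ofReal ENNReal.toReal_nonneg, Real.sqrt_eq_rpow, one_div]
  have hlower : 1 ≤ ε + ε' + √(μ E).toReal * √B := by
    have := (ENNReal.mul_le_mul_iff_left hN0 hf.eLpNorm_ne_top).1 <| (one_mul _).trans_le <|
      eLpNorm_le_mul_eLpNorm_of_concentrated he2 horth hbound hE hf hconc hspec
    rwa [hμE, ← ENNReal.ofReal_mul (Real.sqrt_nonneg _), ← ENNReal.ofReal_add hε0 hε'0,
      ← ENNReal.ofReal_add (by positivity) (by positivity), ENNReal.one_le_ofReal] at this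
  calc (1 - ε - ε') ^ 2 ≤ (√(μ E).toReal * √B) ^ 2 :=
        pow_le_pow_left₀ (by linarith) (by linarith) 2
    _ = (μ E).toReal * B := by rw [mul_pow, Real.sq_sqrt ENNReal.toReal_nonneg, Real.sq_sqrt hB]

/-- Size-dependent uncertainty principle: if `∑_{j ∈ X_S} |e_j(x)|² ≤ B` a.e. and a
nonzero `f ∈ L²` is `L²`-concentrated on `E` and spectrally concentrated on the finite
set `X_S`, then `(1-ε-ε')² ≤ μ(E) ⬝ B`. -/
theorem statement9 {M J : Type*} [MeasurableSpace M] [DecidableEq J] (μ : Measure M)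
    (e : J → M → ℂ) (he2 : ∀ j, MemLp (e j) 2 μ)
    (horth : ∀ i j, ∫ x, e i x * (starRingEnd ℂ) (e j x) ∂μ = if i = j then 1 else 0)
    (XS : Finset J) (E : Set M) (hE : MeasurableSet E) (hEfin : μ E < ⊤)
    (B : ℝ) (hB : 0 ≤ B)
    (hbound : ∀ᵐ x ∂μ, ∑ j ∈ XS, ‖e j x‖ ^ 2 ≤ B)
    (f : M → ℂ) (hf : MemLp f 2 μ) (hf0 : ¬ (f =ᵐ[μ] 0))
    (ε ε' : ℝ) (hε0 : 0 ≤ ε) (hε1 : ε < 1) (hε'0 : 0 ≤ ε') (hε'1 : ε' < 1)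
    (hsum : ε + ε' < 1)
    (hconc : eLpNorm (f - E.indicator f) 2 μ ≤ ENNReal.ofReal ε * eLpNorm f 2 μ)
    (hspec : eLpNorm
        (f - fun x => ∑ j ∈ XS, (∫ y, f y * (starRingEnd ℂ) (e j y) ∂μ) * e j x) 2 μ
      ≤ ENNReal.ofReal ε' * eLpNorm f 2 μ) :
    (1 - ε - ε') ^ 2 ≤ (μ E).toReal * B :=
  statement9_general μ e he2 horth XS E hE hEfin B hB hbound f hf hf0 ε ε' hε0 hε'0 hsum hconc hspec
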